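/- arXiv:2308.16700 — 2 statements merged into one kernel-verified Lean document; each statement's English description precedes it below -/
import Mathlib

section
/- Let Σ be a positive definite covariance matrix on ℝ^(a+b), partitioned into blocks Σ_aa, Σ_ab, Σ_ba, Σ_bb, and let μ ∈ ℝ^(a+b) be partitioned into μ_a, μ_b. Then the Schur complement Σ' = Σ_aa − Σ_ab Σ_bb⁻¹ Σ_ba is positive definite, and the family of Gaussian measures x_b ↦ N(μ_a + Σ_ab Σ_bb⁻¹ (x_b − μ_b), Σ') is a regular conditional distribution of the first a coordinates given the last b coordinates: for all measurable sets S ⊆ ℝ^a and T ⊆ ℝ^b, N(μ, Σ)({x : x_a ∈ S and x_b ∈ T}) = ∫_T N(μ_a + Σ_ab Σ_bb⁻¹ (x_b − μ_b), Σ')(S) d N(μ_b, Σ_bb)(x_b). -/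
open MeasureTheory ProbabilityTheory Matrix
open scoped NNReal

/-- The multivariate Gaussian measure `N(μ, S)` on `ℝⁿ` (for positive definite `S`),
with density `(2π)^(-n/2) * (det S)^(-1/2) * exp (-½ (x-μ)ᵀ S⁻¹ (x-μ))` w.r.t. Lebesgue
measure. -/
noncomputable def multivariateGaussian {n : ℕ} (μ : Fin n → ℝ)
    (S : Matrix (Fin n) (Fin n) ℝ) : Measure (Fin n → ℝ) :=
  volume.withDensity fun x =>
    ENNReal.ofReal ((2 * Real.pi) ^ (-(n : ℝ) / 2) * S.det ^ (-(1 : ℝ) / 2) *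
      Real.exp (-(1 / 2) * ((x - μ) ⬝ᵥ S⁻¹.mulVec (x - μ))))


set_option linter.unusedSectionVars false
set_option maxHeartbeats 1000000

namespace MGCondAux

variable {m n : Type*} [Fintype m] [Fintype n] [DecidableEq m] [DecidableEq n]

lemma isHermitian_submatrix {M : Matrix n n ℝ} (hM : M.IsHermitian) (f : m → n) :
    (M.submatrix f f).IsHermitian := by
  have : (M.submatrix f f)ᴴ = Mᴴ.submatrix f f := conjTranspose_submatrix M f f
  rw [Matrix.IsHermitian, this, hM.eq]

lemma posDef_submatrix_equiv {M : Matrix n n ℝ} (hM : M.PosDef) (e : m ≃ n) :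
    (M.submatrix e e).PosDef := by
  refine PosDef.of_dotProduct_mulVec_pos (isHermitian_submatrix hM.1 e) fun x hx => ?_
  have hx' : (x ∘ e.symm) ≠ 0 := by
    intro h
    apply hx
    funext i
    simpa using congrFun h (e i)
  have hp := hM.dotProduct_mulVec_pos hx'
  have h1 : (M.submatrix e e) *ᵥ x = (M *ᵥ (x ∘ e.symm)) ∘ e :=
    submatrix_mulVec_equiv M x (e : m → n) e
  rw [h1, star_trivial, ← comp_equiv_symm_dotProduct x (M *ᵥ (x ∘ e.symm)) e]
  simpa [star_trivial] using hp

lemma posDef_toBlocks₂₂ {A : Matrix m m ℝ} {B : Matrix m n ℝ} {C : Matrix n m ℝ}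
    {D : Matrix n n ℝ} (h : (fromBlocks A B C D).PosDef) : D.PosDef := by
  refine PosDef.of_dotProduct_mulVec_pos ?_ fun x hx => ?_
  · have h1 := h.1.eq
    rw [fromBlocks_conjTranspose] at h1
    have := congrArg Matrix.toBlocks₂₂ h1
    simpa [Matrix.toBlocks_fromBlocks₂₂, Matrix.IsSymm] using this
  · have hx' : (Sum.elim (0 : m → ℝ) x) ≠ 0 := by
      intro hc
      exact hx (funext fun i => congrFun hc (Sum.inr i))
    have := h.dotProduct_mulVec_pos hx'
    simpa [fromBlocks_mulVec, star_trivial, sumElim_dotProduct_sumElim] using this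

section Core

variable (a b : ℕ) (S : Matrix (Fin (a + b)) (Fin (a + b)) ℝ)

lemma core (hS : S.PosDef) :
    (S.submatrix (Fin.castAdd b) (Fin.castAdd b) -
        S.submatrix (Fin.castAdd b) (Fin.natAdd a) *
          (S.submatrix (Fin.natAdd a) (Fin.natAdd a))⁻¹ *
          S.submatrix (Fin.natAdd a) (Fin.castAdd b)).PosDef ∧
    (S.submatrix (Fin.natAdd a) (Fin.natAdd a)).PosDef ∧
    S.det = (S.submatrix (Fin.natAdd a) (Fin.natAdd a)).det *
      (S.submatrix (Fin.castAdd b) (Fin.castAdd b) -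
        S.submatrix (Fin.castAdd b) (Fin.natAdd a) *
          (S.submatrix (Fin.natAdd a) (Fin.natAdd a))⁻¹ *
          S.submatrix (Fin.natAdd a) (Fin.castAdd b)).det ∧
    ∀ v : Fin (a + b) → ℝ,
      v ⬝ᵥ S⁻¹ *ᵥ v =
        ((fun i => v (Fin.castAdd b i)) -
            (S.submatrix (Fin.castAdd b) (Fin.natAdd a) *
              (S.submatrix (Fin.natAdd a) (Fin.natAdd a))⁻¹) *ᵥ (fun i => v (Fin.natAdd a i))) ⬝ᵥ
          (S.submatrix (Fin.castAdd b) (Fin.castAdd b) -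
            S.submatrix (Fin.castAdd b) (Fin.natAdd a) *
              (S.submatrix (Fin.natAdd a) (Fin.natAdd a))⁻¹ *
              S.submatrix (Fin.natAdd a) (Fin.castAdd b))⁻¹ *ᵥ
          ((fun i => v (Fin.castAdd b i)) -
            (S.submatrix (Fin.castAdd b) (Fin.natAdd a) *
              (S.submatrix (Fin.natAdd a) (Fin.natAdd a))⁻¹) *ᵥ (fun i => v (Fin.natAdd a i))) +
        (fun i => v (Fin.natAdd a i)) ⬝ᵥ
          (S.submatrix (Fin.natAdd a) (Fin.natAdd a))⁻¹ *ᵥ (fun i => v (Fin.natAdd a i)) := by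
  classical
  set A := S.submatrix (Fin.castAdd b) (Fin.castAdd b) with hA
  set B := S.submatrix (Fin.castAdd b) (Fin.natAdd a) with hB
  set C := S.submatrix (Fin.natAdd a) (Fin.castAdd b) with hC
  set D := S.submatrix (Fin.natAdd a) (Fin.natAdd a) with hD
  set Sa := A - B * D⁻¹ * C with hSa
  have hsymm : ∀ p q, S q p = S p q := fun p q => by
    have := congrFun (congrFun hS.1.eq p) q
    simpa [Matrix.conjTranspose_apply] using this
  set e : Fin a ⊕ Fin b ≃ Fin (a + b) := finSumFinEquiv with he
  set T := S.submatrix e e with hT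
  have hTpd : T.PosDef := posDef_submatrix_equiv hS e
  have hTf : T = fromBlocks A B C D := by
    ext i j
    cases i <;> cases j <;>
      simp [hT, hA, hB, hC, hD, he, Matrix.submatrix_apply, Matrix.fromBlocks]
  have hDpd : D.PosDef := posDef_toBlocks₂₂ (hTf ▸ hTpd)
  haveI : Invertible D := hDpd.isUnit.invertible
  -- transpose facts
  have hDsymm : Dᵀ = D := by
    ext i j
    exact hsymm _ _
  have hBT : Bᵀ = C := by
    ext i j
    exact hsymm _ _
  have hBH : Bᴴ = C := by
    rw [← hBT]
    ext i j
    simp [Matrix.conjTranspose_apply]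
  -- Schur complement is PosDef
  have hCH : Cᴴ = B := by rw [← hBH, conjTranspose_conjTranspose]
  have hAh : Aᴴ = A := (isHermitian_submatrix hS.1 _).eq
  have hDh : Dᴴ = D := hDpd.1.eq
  have hSapd : Sa.PosDef := by
    refine PosDef.of_dotProduct_mulVec_pos ?_ ?_
    · show Saᴴ = Sa
      rw [hSa, conjTranspose_sub, hAh, conjTranspose_mul, conjTranspose_mul,
        conjTranspose_nonsing_inv, hDh, hBH, hCH, ← Matrix.mul_assoc]
    · intro x hx
      set y : Fin b → ℝ := -((D⁻¹ * Bᴴ) *ᵥ x) with hy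
      have hxy : Sum.elim x y ≠ 0 := by
        intro hc
        exact hx (funext fun i => congrFun hc (Sum.inl i))
      have hq := hTpd.dotProduct_mulVec_pos hxy
      have hsc := schur_complement_eq₂₂ A B x y hDpd.1
      have hTf' : T = fromBlocks A B Bᴴ D := by rw [hTf, hBH]
      rw [hTf'] at hq
      have hzero : (D⁻¹ * Bᴴ) *ᵥ x + y = 0 := by
        rw [hy]; abel
      rw [dotProduct_mulVec, hsc, hzero] at hq
      have : (0:ℝ) < star x ᵥ* (A - B * D⁻¹ * Bᴴ) ⬝ᵥ x := by
        simpa [star_trivial] using hq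
      rw [star_trivial, dotProduct_mulVec, hSa, ← hBH]
      simpa [star_trivial] using this
  refine ⟨hSapd, hDpd, ?_, ?_⟩
  · -- determinant
    have h1 : S.det = T.det := (Matrix.det_submatrix_equiv_self e S).symm
    rw [h1, hTf, Matrix.det_fromBlocks₂₂, invOf_eq_nonsing_inv]
  · -- quadratic form
    intro v
    set va : Fin a → ℝ := fun i => v (Fin.castAdd b i) with hva
    set vb : Fin b → ℝ := fun i => v (Fin.natAdd a i) with hvb
    have hdetT : IsUnit T.det := hTpd.det_pos.ne'.isUnit
    have hdetD : IsUnit D.det := hDpd.det_pos.ne'.isUnit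
    have hdetSa : IsUnit Sa.det := hSapd.det_pos.ne'.isUnit
    set w' : Fin a → ℝ := va - (B * D⁻¹) *ᵥ vb with hw'
    set ua : Fin a → ℝ := Sa⁻¹ *ᵥ w' with hua
    set ub : Fin b → ℝ := D⁻¹ *ᵥ vb - D⁻¹ *ᵥ (C *ᵥ ua) with hub
    have hcomp : v ∘ e = Sum.elim va vb := by
      funext i
      cases i <;> simp [he, hva, hvb]
    have key0 : v ⬝ᵥ S⁻¹ *ᵥ v = (v ∘ e) ⬝ᵥ T⁻¹ *ᵥ (v ∘ e) := by
      have hinv : T⁻¹ = S⁻¹.submatrix e e := by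
        rw [hT]; exact inv_submatrix_equiv S e e
      rw [hinv, submatrix_mulVec_equiv]
      have : (v ∘ e) ∘ e.symm = v := by
        funext i; simp
      rw [this, comp_equiv_dotProduct_comp_equiv]
    have hTu : T *ᵥ Sum.elim ua ub = Sum.elim va vb := by
      have hDub : D *ᵥ ub = vb - C *ᵥ ua := by
        rw [hub, mulVec_sub, mulVec_mulVec, mulVec_mulVec,
          Matrix.mul_nonsing_inv D hdetD, one_mulVec, one_mulVec]
      have h1 : A *ᵥ ua + B *ᵥ ub = va := by
        have hBub : B *ᵥ ub = (B * D⁻¹) *ᵥ vb - (B * D⁻¹ * C) *ᵥ ua := by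
          simp [hub, mulVec_sub, mulVec_mulVec, Matrix.mul_assoc]
        have hSaua : Sa *ᵥ ua = w' := by
          rw [hua, mulVec_mulVec, Matrix.mul_nonsing_inv Sa hdetSa, one_mulVec]
        have hAm : A *ᵥ ua - (B * D⁻¹ * C) *ᵥ ua = w' := by
          rw [← hSaua, hSa, sub_mulVec]
        calc A *ᵥ ua + B *ᵥ ub
            = (A *ᵥ ua - (B * D⁻¹ * C) *ᵥ ua) + (B * D⁻¹) *ᵥ vb := by rw [hBub]; abel
          _ = w' + (B * D⁻¹) *ᵥ vb := by rw [hAm]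
          _ = va := by rw [hw']; abel
      have h2 : C *ᵥ ua + D *ᵥ ub = vb := by rw [hDub]; abel
      rw [hTf, fromBlocks_mulVec, Sum.elim_comp_inl, Sum.elim_comp_inr, h1, h2]
    have hu : T⁻¹ *ᵥ Sum.elim va vb = Sum.elim ua ub := by
      rw [← hTu, mulVec_mulVec, Matrix.nonsing_inv_mul T hdetT, one_mulVec]
    rw [key0, hcomp, hu, sumElim_dotProduct_sumElim]
    have htr : (B * D⁻¹)ᵀ = D⁻¹ * C := by
      rw [transpose_mul, transpose_nonsing_inv, hDsymm, hBT]
    have hcross : ((B * D⁻¹) *ᵥ vb) ⬝ᵥ ua = vb ⬝ᵥ (D⁻¹ *ᵥ (C *ᵥ ua)) := by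
      have h4 : vb ⬝ᵥ ((B * D⁻¹)ᵀ *ᵥ ua) = ((B * D⁻¹) *ᵥ vb) ⬝ᵥ ua := by
        rw [dotProduct_mulVec, vecMul_transpose]
      rw [← h4, htr, ← mulVec_mulVec]
    have hva2 : va = w' + (B * D⁻¹) *ᵥ vb := by rw [hw']; abel
    calc va ⬝ᵥ ua + vb ⬝ᵥ ub
        = (w' + (B * D⁻¹) *ᵥ vb) ⬝ᵥ ua + vb ⬝ᵥ (D⁻¹ *ᵥ vb - D⁻¹ *ᵥ (C *ᵥ ua)) := by
          rw [← hva2, ← hub]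
      _ = w' ⬝ᵥ ua + (((B * D⁻¹) *ᵥ vb) ⬝ᵥ ua - vb ⬝ᵥ (D⁻¹ *ᵥ (C *ᵥ ua)))
            + vb ⬝ᵥ (D⁻¹ *ᵥ vb) := by
          rw [add_dotProduct, dotProduct_sub]; ring
      _ = w' ⬝ᵥ Sa⁻¹ *ᵥ w' + vb ⬝ᵥ D⁻¹ *ᵥ vb := by
          rw [hcross, sub_self, add_zero, hua]

end Core


lemma measurable_mulVec {α} [MeasurableSpace α] (M : Matrix m n ℝ) {v : α → n → ℝ}
    (hv : Measurable v) : Measurable fun x => M *ᵥ (v x) := by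
  apply measurable_pi_lambda
  intro i
  simp only [mulVec, dotProduct]
  exact Finset.measurable_sum _ fun j _ => ((measurable_pi_apply j).comp hv).const_mul _

lemma measurable_density {α} [MeasurableSpace α] (c : ℝ) (M : Matrix n n ℝ) {v : α → n → ℝ}
    (hv : Measurable v) :
    Measurable fun x => ENNReal.ofReal (c * Real.exp (-(1/2 : ℝ) * (v x ⬝ᵥ M *ᵥ v x))) := by
  apply ENNReal.measurable_ofReal.comp
  apply Measurable.const_mul
  apply Real.measurable_exp.comp
  apply Measurable.const_mul
  simp only [dotProduct, mulVec]
  exact Finset.measurable_sum _ fun i _ => ((measurable_pi_apply i).comp hv).mul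
    (Finset.measurable_sum _ fun j _ => ((measurable_pi_apply j).comp hv).const_mul _)


end MGCondAux

open MGCondAux

/-- Conditioning a multivariate Gaussian: for `N(μ, Σ)` on `ℝ^(a+b)` partitioned into blocks,
the Schur complement `Σ' = Σ_aa - Σ_ab Σ_bb⁻¹ Σ_ba` is positive definite and the family
`x_b ↦ N(μ_a + Σ_ab Σ_bb⁻¹ (x_b - μ_b), Σ')` is a regular conditional distribution of the
first `a` coordinates given the last `b` coordinates. -/
theorem multivariateGaussian_condDistrib (a b : ℕ) (μ : Fin (a + b) → ℝ)
    (S : Matrix (Fin (a + b)) (Fin (a + b)) ℝ) (hS : S.PosDef) :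
    (S.submatrix (Fin.castAdd b) (Fin.castAdd b) -
        S.submatrix (Fin.castAdd b) (Fin.natAdd a) *
          (S.submatrix (Fin.natAdd a) (Fin.natAdd a))⁻¹ *
          S.submatrix (Fin.natAdd a) (Fin.castAdd b)).PosDef ∧
    ∀ (Sset : Set (Fin a → ℝ)) (Tset : Set (Fin b → ℝ)),
      MeasurableSet Sset → MeasurableSet Tset →
      multivariateGaussian μ S
          {x | (fun i => x (Fin.castAdd b i)) ∈ Sset ∧ (fun i => x (Fin.natAdd a i)) ∈ Tset} =
        ∫⁻ xb in Tset,
          multivariateGaussian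
            ((fun i => μ (Fin.castAdd b i)) +
              (S.submatrix (Fin.castAdd b) (Fin.natAdd a) *
                (S.submatrix (Fin.natAdd a) (Fin.natAdd a))⁻¹).mulVec
                (xb - fun i => μ (Fin.natAdd a i)))
            (S.submatrix (Fin.castAdd b) (Fin.castAdd b) -
              S.submatrix (Fin.castAdd b) (Fin.natAdd a) *
                (S.submatrix (Fin.natAdd a) (Fin.natAdd a))⁻¹ *
                S.submatrix (Fin.natAdd a) (Fin.castAdd b))
            Sset
          ∂ multivariateGaussian (fun i => μ (Fin.natAdd a i))
              (S.submatrix (Fin.natAdd a) (Fin.natAdd a)) := by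
  classical
  set A' := S.submatrix (Fin.castAdd b) (Fin.castAdd b) with hA'
  set Bm := S.submatrix (Fin.castAdd b) (Fin.natAdd a) with hBm
  set Cm := S.submatrix (Fin.natAdd a) (Fin.castAdd b) with hCm
  set Dm := S.submatrix (Fin.natAdd a) (Fin.natAdd a) with hDm
  set Sa := A' - Bm * Dm⁻¹ * Cm with hSaDef
  set μa : Fin a → ℝ := fun i => μ (Fin.castAdd b i) with hμa
  set μb : Fin b → ℝ := fun i => μ (Fin.natAdd a i) with hμb
  obtain ⟨hSapd, hDpd, hdet, hquad⟩ := core a b S hS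
  simp only [← hA', ← hBm, ← hCm, ← hDm, ← hSaDef] at hSapd hDpd hdet hquad
  refine ⟨hSapd, ?_⟩
  intro Sset Tset hSset hTset
  set ca : ℝ := (2 * Real.pi) ^ (-(a : ℝ) / 2) * Sa.det ^ (-(1:ℝ) / 2) with hca
  set cb : ℝ := (2 * Real.pi) ^ (-(b : ℝ) / 2) * Dm.det ^ (-(1:ℝ) / 2) with hcb
  set g : (Fin b → ℝ) → ENNReal := fun y =>
    ENNReal.ofReal (cb * Real.exp (-(1/2 : ℝ) * ((y - μb) ⬝ᵥ Dm⁻¹ *ᵥ (y - μb)))) with hg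
  set h : (Fin b → ℝ) → (Fin a → ℝ) → ENNReal := fun y z =>
    ENNReal.ofReal (ca * Real.exp (-(1/2 : ℝ) *
      ((z - (μa + (Bm * Dm⁻¹) *ᵥ (y - μb))) ⬝ᵥ Sa⁻¹ *ᵥ
        (z - (μa + (Bm * Dm⁻¹) *ᵥ (y - μb)))))) with hh
  have hcbnn : 0 ≤ cb := by
    rw [hcb]
    exact mul_nonneg (Real.rpow_nonneg (by positivity) _) (Real.rpow_nonneg hDpd.det_pos.le _)
  -- the Gaussian measures as withDensity
  have hGb : multivariateGaussian μb Dm = volume.withDensity g := by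
    unfold _root_.multivariateGaussian
    rw [hg, hcb]
  have hGa : ∀ y : Fin b → ℝ,
      multivariateGaussian (μa + (Bm * Dm⁻¹) *ᵥ (y - μb)) Sa = volume.withDensity (h y) := by
    intro y
    unfold _root_.multivariateGaussian
    rw [hh, hca]
  -- measurable equivalence with the product space
  set e : Fin a ⊕ Fin b ≃ Fin (a + b) := finSumFinEquiv with he
  set φ : (Fin (a + b) → ℝ) ≃ᵐ (Fin a → ℝ) × (Fin b → ℝ) :=
    (MeasurableEquiv.piCongrLeft (fun _ => ℝ) e).symm.trans
      (MeasurableEquiv.sumPiEquivProdPi fun _ => ℝ) with hφ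
  have hφapp : ∀ x, φ x = (fun i => x (Fin.castAdd b i), fun i => x (Fin.natAdd a i)) := by
    intro x
    rw [hφ]
    ext i <;>
      simp [MeasurableEquiv.trans_apply, MeasurableEquiv.piCongrLeft,
        MeasurableEquiv.symm, MeasurableEquiv.coe_mk,
        MeasurableEquiv.coe_sumPiEquivProdPi, Equiv.sumPiEquivProdPi,
        Equiv.piCongrLeft_symm_apply, he]
  have hmp : MeasurePreserving φ volume volume := by
    rw [hφ]
    have h1 : MeasurePreserving (MeasurableEquiv.piCongrLeft (fun _ : Fin (a+b) => ℝ) e).symm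
        volume volume :=
      (volume_measurePreserving_piCongrLeft (fun _ => ℝ) e).symm _
    have h2 : MeasurePreserving (MeasurableEquiv.sumPiEquivProdPi
        (fun _ : Fin a ⊕ Fin b => ℝ)) volume volume :=
      (volume_measurePreserving_sumPiEquivProdPi_symm (fun _ : Fin a ⊕ Fin b => ℝ)).symm _
    exact h2.comp h1
  have hUeq : {x | (fun i => x (Fin.castAdd b i)) ∈ Sset ∧ (fun i => x (Fin.natAdd a i)) ∈ Tset}
      = φ ⁻¹' (Sset ×ˢ Tset) := by
    ext x
    simp [hφapp x, Set.mem_prod]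
  -- pointwise density factorization
  have hfac : ∀ x : Fin (a + b) → ℝ,
      ENNReal.ofReal ((2 * Real.pi) ^ (-((a + b : ℕ) : ℝ) / 2) * S.det ^ (-(1:ℝ) / 2) *
        Real.exp (-(1/2 : ℝ) * ((x - μ) ⬝ᵥ S⁻¹ *ᵥ (x - μ)))) =
      g (fun i => x (Fin.natAdd a i)) * h (fun i => x (Fin.natAdd a i))
        (fun i => x (Fin.castAdd b i)) := by
    intro x
    have hq := hquad (x - μ)
    have e1 : (fun i => (x - μ) (Fin.castAdd b i)) = (fun i => x (Fin.castAdd b i)) - μa := rfl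
    have e2 : (fun i => (x - μ) (Fin.natAdd a i)) = (fun i => x (Fin.natAdd a i)) - μb := rfl
    rw [e1, e2] at hq
    have e3 : (fun i => x (Fin.castAdd b i)) - μa -
        (Bm * Dm⁻¹) *ᵥ ((fun i => x (Fin.natAdd a i)) - μb) =
        (fun i => x (Fin.castAdd b i)) -
          (μa + (Bm * Dm⁻¹) *ᵥ ((fun i => x (Fin.natAdd a i)) - μb)) := by
      abel
    rw [e3] at hq
    set xa : Fin a → ℝ := fun i => x (Fin.castAdd b i) with hxa
    set xb : Fin b → ℝ := fun i => x (Fin.natAdd a i) with hxb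
    set qa : ℝ := (xa - (μa + (Bm * Dm⁻¹) *ᵥ (xb - μb))) ⬝ᵥ Sa⁻¹ *ᵥ
      (xa - (μa + (Bm * Dm⁻¹) *ᵥ (xb - μb))) with hqa
    set qb : ℝ := (xb - μb) ⬝ᵥ Dm⁻¹ *ᵥ (xb - μb) with hqb
    have hc : (2 * Real.pi) ^ (-((a + b : ℕ) : ℝ) / 2) * S.det ^ (-(1:ℝ) / 2) = cb * ca := by
      have h2pi : (0:ℝ) < 2 * Real.pi := by positivity
      have hsplit : (-((a + b : ℕ) : ℝ) / 2) = (-(a : ℝ) / 2) + (-(b : ℝ) / 2) := by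
        push_cast; ring
      rw [hsplit, Real.rpow_add h2pi, hdet,
        Real.mul_rpow hDpd.det_pos.le hSapd.det_pos.le, hca, hcb]
      ring
    rw [hc, hq]
    have hexp : Real.exp (-(1/2 : ℝ) * (qa + qb)) =
        Real.exp (-(1/2 : ℝ) * qb) * Real.exp (-(1/2 : ℝ) * qa) := by
      rw [← Real.exp_add]
      ring_nf
    rw [hexp,
      show cb * ca * (Real.exp (-(1/2 : ℝ) * qb) * Real.exp (-(1/2 : ℝ) * qa)) =
        (cb * Real.exp (-(1/2 : ℝ) * qb)) * (ca * Real.exp (-(1/2 : ℝ) * qa)) from by ring,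
      ENNReal.ofReal_mul (mul_nonneg hcbnn (Real.exp_nonneg _))]
  -- measurability facts
  have hgmeas : Measurable g := by
    rw [hg]
    exact measurable_density cb Dm⁻¹ (measurable_id.sub measurable_const)
  have hFmeas : Measurable fun p : (Fin a → ℝ) × (Fin b → ℝ) => g p.2 * h p.2 p.1 := by
    apply (hgmeas.comp measurable_snd).mul
    rw [hh]
    exact measurable_density ca Sa⁻¹
      (measurable_fst.sub (measurable_const.add
        (measurable_mulVec (Bm * Dm⁻¹) (measurable_snd.sub measurable_const))))
  -- main computation
  have hUmeas : MeasurableSet (φ ⁻¹' (Sset ×ˢ Tset)) := φ.measurable (hSset.prod hTset)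
  rw [hUeq, hGb]
  simp only [hGa]
  unfold _root_.multivariateGaussian
  rw [withDensity_apply _ hUmeas]
  have hstep1 : ∫⁻ x in φ ⁻¹' (Sset ×ˢ Tset),
      ENNReal.ofReal ((2 * Real.pi) ^ (-((a + b : ℕ) : ℝ) / 2) * S.det ^ (-(1:ℝ) / 2) *
        Real.exp (-(1/2 : ℝ) * ((x - μ) ⬝ᵥ S⁻¹ *ᵥ (x - μ)))) =
      ∫⁻ x in φ ⁻¹' (Sset ×ˢ Tset),
        (fun p : (Fin a → ℝ) × (Fin b → ℝ) => g p.2 * h p.2 p.1) (φ x) := by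
    refine lintegral_congr fun x => ?_
    rw [hfac x, hφapp x]
  rw [hstep1]
  have hstep2 := hmp.setLIntegral_comp_preimage_emb φ.measurableEmbedding
    (fun p : (Fin a → ℝ) × (Fin b → ℝ) => g p.2 * h p.2 p.1) (Sset ×ˢ Tset)
  rw [hstep2, Measure.volume_eq_prod, ← Measure.prod_restrict,
    lintegral_prod_symm _ hFmeas.aemeasurable]
  -- now LHS is  ∫⁻ y in Tset, ∫⁻ x in Sset, g y * h y x
  rw [restrict_withDensity hTset,
    lintegral_withDensity_eq_lintegral_mul_non_measurable _ hgmeas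
      (ae_of_all _ fun y => by rw [hg]; exact ENNReal.ofReal_lt_top)]
  refine lintegral_congr fun y => ?_
  show ∫⁻ x in Sset, g y * h y x ∂volume = g y * (volume.withDensity (h y)) Sset
  rw [withDensity_apply _ hSset,
    lintegral_const_mul' _ _ (by rw [hg]; exact ENNReal.ofReal_ne_top)]
end

section
/- Let Σ be a positive definite covariance matrix on ℝ^(n+1), μ ∈ ℝ^(n+1), and regard the last coordinate as Y and the first n coordinates as X_a; write Σ_aa for the upper-left n×n block, Σ_{·Y} ∈ ℝⁿ for the last column restricted to the first n rows, Σ_{Y·} = Σ_{·Y}ᵀ, and Σ_YY > 0 for the bottom-right entry. Let c ∈ ℝ. Then Σ' = Σ_aa − (1/Σ_YY) Σ_{·Y} Σ_{Y·} is positive definite, and the family of Gaussian measures y ↦ N(μ_a + ((y − μ_Y)/Σ_YY) Σ_{·Y}, Σ') is a regular conditional distribution of X_a given Y: for all measurable S ⊆ ℝⁿ and T ⊆ ℝ, N(μ, Σ)({x : (x₁,…,xₙ) ∈ S and x_{n+1} ∈ T}) = ∫_T N(μ_a + ((y − μ_Y)/Σ_YY) Σ_{·Y}, Σ')(S) d gaussianReal(μ_Y,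 Σ_YY)(y). In particular, conditioning on Y = c yields the Gaussian N(μ_a + ((c − μ_Y)/Σ_YY) Σ_{·Y}, Σ'). -/
open MeasureTheory ProbabilityTheory Matrix
open scoped NNReal

private lemma posDef_submatrix_equiv {l m : Type*} [Fintype l] [Fintype m] [DecidableEq l]
    [DecidableEq m] {S : Matrix m m ℝ} (hS : S.PosDef) (e : l ≃ m) :
    (S.submatrix e e).PosDef := by
  refine PosDef.of_dotProduct_mulVec_pos ((isHermitian_submatrix_equiv e).2 hS.1) fun x hx => ?_
  have hx' : (x ∘ e.symm) ≠ 0 := fun h => hx (by funext i; simpa using congrFun h (e i))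
  have h2 := hS.dotProduct_mulVec_pos hx'
  rw [submatrix_mulVec_equiv]
  simp only [star_trivial] at h2 ⊢
  have : x ⬝ᵥ ((S *ᵥ (x ∘ e.symm)) ∘ e) = (x ∘ e.symm) ⬝ᵥ (S *ᵥ (x ∘ e.symm)) := by
    simp only [dotProduct]
    exact Fintype.sum_equiv e (fun i => x i * (S *ᵥ x ∘ ⇑e.symm) (e i))
      (fun j => (x ∘ e.symm) j * (S *ᵥ x ∘ ⇑e.symm) j) (fun i => by simp)
  rw [this]; exact h2

private lemma aux_key (n : ℕ) (S : Matrix (Fin (n + 1)) (Fin (n + 1)) ℝ) (hS : S.PosDef)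
    (b : Fin n → ℝ) (d : ℝ) (A' : Matrix (Fin n) (Fin n) ℝ)
    (hb : ∀ k, S k.castSucc (Fin.last n) = b k) (hd : S (Fin.last n) (Fin.last n) = d)
    (hA' : ∀ k l, A' k l = S k.castSucc l.castSucc - (1 / d) * b k * b l) :
    A'.PosDef ∧ S.det = A'.det * d ∧ 0 < d ∧
    ∀ w : Fin (n + 1) → ℝ, w ⬝ᵥ S⁻¹ *ᵥ w =
      ((fun k => w k.castSucc) - (w (Fin.last n) / d) • b) ⬝ᵥ
          A'⁻¹ *ᵥ ((fun k => w k.castSucc) - (w (Fin.last n) / d) • b) +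
        w (Fin.last n) * w (Fin.last n) / d := by
  have hsym : ∀ i j, S i j = S j i := fun i j => by
    conv_lhs => rw [← hS.1]
    simp [conjTranspose_apply]
  have hd0 : 0 < d := by
    have h := hS.dotProduct_mulVec_pos (x := Pi.single (Fin.last n) 1) (by
      intro h; simpa using congrFun h (Fin.last n))
    rw [← hd]
    simpa [mulVec_single, single_dotProduct] using h
  set e : Fin n ⊕ Fin 1 ≃ Fin (n + 1) := finSumFinEquiv with he
  have he1 : ∀ k : Fin n, e (Sum.inl k) = k.castSucc := fun k => rfl
  have he2 : ∀ j : Fin 1, e (Sum.inr j) = Fin.last n := fun j => by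
    apply Fin.ext
    simp [he, Fin.ext_iff]
  set B : Matrix (Fin n) (Fin 1) ℝ := Matrix.of fun k _ => b k with hB
  set Dm : Matrix (Fin 1) (Fin 1) ℝ := Matrix.of fun _ _ => d with hDm
  set Saa : Matrix (Fin n) (Fin n) ℝ := Matrix.of fun k l => S k.castSucc l.castSucc with hSaa
  have hBH : Bᴴ = Matrix.of fun _ l => b l := by
    ext i j; simp [conjTranspose_apply, hB]
  have hT : S.submatrix e e = fromBlocks Saa B Bᴴ Dm := by
    ext i j
    rcases i with i | i <;> rcases j with j | j <;>
      simp [he1, he2, hBH, hB, hDm, hSaa, hb, hd, hsym]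
  have hd' : d ≠ 0 := hd0.ne'
  letI iD : Invertible Dm := invertibleOfRightInverse Dm (Matrix.of fun _ _ => d⁻¹) (by
    ext i j
    simp [hDm, mul_apply, Matrix.one_apply, Fin.sum_univ_one, mul_inv_cancel₀ hd',
      Subsingleton.elim i j])
  have hiD : ⅟Dm = Matrix.of fun _ _ => d⁻¹ := rfl
  have hSchur : Saa - B * ⅟Dm * Bᴴ = A' := by
    rw [hiD, hBH]
    ext k l
    simp only [Matrix.sub_apply, hSaa, hB, Matrix.mul_apply, Fin.sum_univ_one,
      Matrix.of_apply, hA', div_eq_mul_inv, one_mul]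
    ring
  have hDmH : Dm.IsHermitian := by
    ext i j; simp [hDm, conjTranspose_apply]
  have hTpos : (fromBlocks Saa B Bᴴ Dm).PosDef := hT ▸ posDef_submatrix_equiv hS e
  have hA'pos : A'.PosDef := by
    refine PosDef.of_dotProduct_mulVec_pos ?_ ?_
    · ext k l
      simp [conjTranspose_apply, hA']
      rw [hsym]; ring
    · intro v hv
      have hDi : Dm⁻¹ = ⅟Dm := (invOf_eq_nonsing_inv Dm).symm
      have hschur := schur_complement_eq₂₂ Saa B (D := Dm) v (-((Dm⁻¹ * Bᴴ) *ᵥ v)) hDmH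
      rw [add_neg_cancel] at hschur
      have hxy : Sum.elim v (-((Dm⁻¹ * Bᴴ) *ᵥ v)) ≠ 0 := by
        intro h
        exact hv (funext fun k => congrFun h (Sum.inl k))
      have hpos := hTpos.dotProduct_mulVec_pos hxy
      rw [dotProduct_mulVec] at hpos
      simp only [star_trivial] at hschur hpos
      rw [hschur] at hpos
      rw [hDi, hSchur] at hpos
      simp only [zero_vecMul, zero_dotProduct, zero_add] at hpos
      simpa [dotProduct_mulVec] using hpos
  letI iA' : Invertible A' := A'.invertibleOfIsUnitDet (isUnit_iff_ne_zero.2 hA'pos.det_pos.ne')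
  letI iE : Invertible (Saa - B * ⅟Dm * Bᴴ) := hSchur ▸ iA'
  have hiE : ⅟(Saa - B * ⅟Dm * Bᴴ) = A'⁻¹ := by
    rw [invOf_eq_nonsing_inv, hSchur]
  have hdet : S.det = A'.det * d := by
    rw [← det_submatrix_equiv_self e S, hT, det_fromBlocks₂₂, hSchur]
    rw [show Dm.det = d from by simp [det_fin_one, hDm]]
    ring
  refine ⟨hA'pos, hdet, hd0, fun w => ?_⟩
  set u : Fin n → ℝ := fun k => w k.castSucc with hu
  set t : ℝ := w (Fin.last n) with ht
  have hws : (Sum.elim u (fun _ => t) : Fin n ⊕ Fin 1 → ℝ) = w ∘ e := by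
    funext i
    rcases i with k | j
    · simp [he1, hu]
    · simp [he2, ht]
  have hcomp : (Sum.elim u (fun _ => t) : Fin n ⊕ Fin 1 → ℝ) ∘ e.symm = w := by
    rw [hws]; funext j; simp
  have step1 : w ⬝ᵥ S⁻¹ *ᵥ w =
      Sum.elim u (fun _ => t) ⬝ᵥ (S.submatrix e e)⁻¹ *ᵥ Sum.elim u (fun _ => t) := by
    rw [inv_submatrix_equiv, submatrix_mulVec_equiv, hcomp]
    simp only [dotProduct]
    exact (Fintype.sum_equiv e
      (fun j => Sum.elim u (fun _ => t) j * (S⁻¹ *ᵥ w) (e j))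
      (fun i => w i * (S⁻¹ *ᵥ w) i)
      (fun j => by rw [hws]; rfl)).symm
  letI iT : Invertible (fromBlocks Saa B Bᴴ Dm) := fromBlocks₂₂Invertible Saa B Bᴴ Dm
  have hTinv : (S.submatrix e e)⁻¹ =
      fromBlocks A'⁻¹ (-(A'⁻¹ * B * ⅟Dm)) (-(⅟Dm * Bᴴ * A'⁻¹))
        (⅟Dm + ⅟Dm * Bᴴ * A'⁻¹ * B * ⅟Dm) := by
    rw [hT, ← invOf_eq_nonsing_inv, invOf_fromBlocks₂₂_eq, hiE]
  have hBv : ∀ v : Fin 1 → ℝ, B *ᵥ v = v 0 • b := fun v => by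
    funext k
    simp [hB, mulVec, dotProduct, Fin.sum_univ_one, mul_comm]
  have hBHv : ∀ v : Fin n → ℝ, Bᴴ *ᵥ v = fun _ => b ⬝ᵥ v := fun v => by
    funext j
    simp [hBH, hB, mulVec, dotProduct]
  have hDv : ∀ v : Fin 1 → ℝ, ⅟Dm *ᵥ v = fun _ => d⁻¹ * v 0 := fun v => by
    funext j
    rw [hiD]
    simp [mulVec, dotProduct, Fin.sum_univ_one]
  have hA'invT : A'⁻¹ᵀ = A'⁻¹ := by
    have h := hA'pos.1.inv
    ext i j
    rw [transpose_apply]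
    conv_lhs => rw [← h]
    simp [conjTranspose_apply]
  have hswap : b ⬝ᵥ (A'⁻¹ *ᵥ u) = u ⬝ᵥ (A'⁻¹ *ᵥ b) := by
    rw [dotProduct_comm, show A'⁻¹ *ᵥ u = u ᵥ* A'⁻¹ from by
      conv_lhs => rw [← hA'invT, mulVec_transpose]
      , ← dotProduct_mulVec]
  rw [step1, hTinv, fromBlocks_mulVec, sumElim_dotProduct_sumElim]
  simp only [Matrix.neg_mulVec, Matrix.add_mulVec, ← mulVec_mulVec, hBv, hBHv, hDv,
    mulVec_smul, dotProduct_add, dotProduct_neg, dotProduct_smul, smul_eq_mul]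
  simp only [mulVec_sub, mulVec_smul, sub_dotProduct, dotProduct_sub, smul_dotProduct,
    dotProduct_smul, smul_eq_mul]
  rw [hswap]
  have hd1 : ∀ v₁ v₂ : Fin 1 → ℝ, v₁ ⬝ᵥ v₂ = v₁ 0 * v₂ 0 := fun v₁ v₂ => by
    simp [dotProduct, Fin.sum_univ_one]
  simp only [hd1]
  field_simp
  simp only [Sum.elim_comp_inl, Sum.elim_comp_inr, hswap]
  ring

/-- Conditioning a multivariate Gaussian on its last coordinate `Y`: the matrix
`Σ' = Σ_aa - (1/Σ_YY) Σ_{·Y} Σ_{Y·}` is positive definite and the family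
`y ↦ N(μ_a + ((y - μ_Y)/Σ_YY) Σ_{·Y}, Σ')` is a regular conditional distribution of the
first `n` coordinates given the last one; in particular, conditioning on `Y = c` yields
the Gaussian `N(μ_a + ((c - μ_Y)/Σ_YY) Σ_{·Y}, Σ')`. -/
theorem multivariateGaussian_condition_last (n : ℕ) (μ : Fin (n + 1) → ℝ)
    (S : Matrix (Fin (n + 1)) (Fin (n + 1)) ℝ) (hS : S.PosDef) (c : ℝ) :
    let Saa : Matrix (Fin n) (Fin n) ℝ := S.submatrix Fin.castSucc Fin.castSucc
    let colY : Fin n → ℝ := fun k => S k.castSucc (Fin.last n)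
    let SYY : ℝ := S (Fin.last n) (Fin.last n)
    let S' : Matrix (Fin n) (Fin n) ℝ :=
      Matrix.of fun k l => Saa k l - (1 / SYY) * colY k * colY l
    let μa : Fin n → ℝ := fun k => μ k.castSucc
    let μY : ℝ := μ (Fin.last n)
    let condDist : ℝ → Measure (Fin n → ℝ) :=
      fun y => multivariateGaussian (μa + ((y - μY) / SYY) • colY) S'
    S'.PosDef ∧
    (∀ (Sset : Set (Fin n → ℝ)) (Tset : Set ℝ),
      MeasurableSet Sset → MeasurableSet Tset →
      multivariateGaussian μ S
          {x | (fun k => x k.castSucc) ∈ Sset ∧ x (Fin.last n) ∈ Tset} =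
        ∫⁻ y in Tset, condDist y Sset ∂ gaussianReal μY SYY.toNNReal) ∧
    condDist c = multivariateGaussian (μa + ((c - μY) / SYY) • colY) S' := by
  intro Saa colY SYY S' μa μY condDist
  obtain ⟨hS'pos, hdet, hd0, hquad⟩ :=
    aux_key n S hS colY SYY S' (fun k => rfl) rfl (fun k l => rfl)
  refine ⟨hS'pos, ?_, rfl⟩
  intro Sset Tset hSset hTset
  have hd' : SYY ≠ 0 := hd0.ne'
  set v : ℝ≥0 := SYY.toNNReal with hv
  have hvS : (v : ℝ) = SYY := Real.coe_toNNReal _ hd0.le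
  have hv0 : v ≠ 0 := (Real.toNNReal_pos.mpr hd0).ne'
  set g : ℝ → (Fin n → ℝ) → ENNReal := fun y a =>
    ENNReal.ofReal ((2 * Real.pi) ^ (-(n : ℝ) / 2) * S'.det ^ (-(1 : ℝ) / 2) *
      Real.exp (-(1 / 2) * ((a - (μa + ((y - μY) / SYY) • colY)) ⬝ᵥ (S'⁻¹.mulVec (a - (μa + ((y - μY) / SYY) • colY)))))) with hg
  have hcond : ∀ y, condDist y = volume.withDensity (g y) := fun y => rfl
  set F : (Fin (n + 1) → ℝ) → ENNReal := fun x =>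
    ENNReal.ofReal ((2 * Real.pi) ^ (-((n : ℝ) + 1) / 2) * S.det ^ (-(1 : ℝ) / 2) *
      Real.exp (-(1 / 2) * ((x - μ) ⬝ᵥ S⁻¹.mulVec (x - μ)))) with hF
  have hMG : multivariateGaussian μ S = volume.withDensity F := by
    rw [_root_.multivariateGaussian]
    congr 1
    funext x
    norm_num [hF]
  set A : Set (Fin (n + 1) → ℝ) :=
    {x | (fun k => x k.castSucc) ∈ Sset ∧ x (Fin.last n) ∈ Tset} with hA
  have hAmeas : MeasurableSet A := by
    refine MeasurableSet.inter ?_ ?_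
    · exact (measurable_pi_lambda _ fun k => measurable_pi_apply k.castSucc) hSset
    · exact (measurable_pi_apply (Fin.last n)) hTset
  set eM := MeasurableEquiv.piFinSuccAbove (fun _ : Fin (n + 1) => ℝ) (Fin.last n) with heM
  have hfun : ∀ (y : ℝ) (a : Fin n → ℝ) (k : Fin n),
      eM.symm (y, a) k.castSucc = a k := by
    intro y a k
    rw [heM]
    simp only [MeasurableEquiv.piFinSuccAbove_symm_apply]
    rw [← Fin.succAbove_last]
    exact Fin.insertNth_apply_succAbove (α := fun _ : Fin (n+1) => ℝ) (Fin.last n) y a k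
  have hlast : ∀ (y : ℝ) (a : Fin n → ℝ), eM.symm (y, a) (Fin.last n) = y := by
    intro y a
    rw [heM]
    simp only [MeasurableEquiv.piFinSuccAbove_symm_apply]
    exact Fin.insertNth_apply_same (α := fun _ : Fin (n+1) => ℝ) (Fin.last n) y a
  have hpre : eM.symm ⁻¹' A = Tset ×ˢ Sset := by
    ext p
    simp only [hA, Set.mem_preimage, Set.mem_setOf_eq, Set.mem_prod]
    constructor
    · rintro ⟨h1, h2⟩
      refine ⟨by rwa [hlast p.1 p.2] at h2, ?_⟩
      have : (fun k => eM.symm (p.1, p.2) k.castSucc) = p.2 := funext fun k => hfun p.1 p.2 k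
      rwa [this] at h1
    · rintro ⟨h1, h2⟩
      constructor
      · have : (fun k => eM.symm (p.1, p.2) k.castSucc) = p.2 := funext fun k => hfun p.1 p.2 k
        rw [this]; exact h2
      · rw [hlast p.1 p.2]; exact h1
  have hquadm : Measurable fun x : Fin (n + 1) → ℝ => (x - μ) ⬝ᵥ S⁻¹ *ᵥ (x - μ) := by
    simp only [Matrix.mulVec, dotProduct, Pi.sub_apply]
    refine Finset.measurable_sum _ fun i _ => Measurable.mul ?_ ?_
    · exact (measurable_pi_apply i).sub measurable_const
    · exact Finset.measurable_sum _ fun j _ =>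
        measurable_const.mul ((measurable_pi_apply j).sub measurable_const)
  have hFmeas : Measurable F := by
    rw [hF]
    exact ENNReal.measurable_ofReal.comp
      (measurable_const.mul (Real.measurable_exp.comp (measurable_const.mul hquadm)))
  have hGmeas : Measurable (Function.uncurry g) := by
    rw [hg]
    refine ENNReal.measurable_ofReal.comp
      (measurable_const.mul (Real.measurable_exp.comp (measurable_const.mul ?_)))
    simp only [Function.uncurry, Matrix.mulVec, dotProduct, Pi.sub_apply, Pi.add_apply,
      Pi.smul_apply, smul_eq_mul]
    refine Finset.measurable_sum _ fun i _ => Measurable.mul ?_ ?_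
    · exact ((measurable_pi_apply i).comp measurable_snd).sub
        (measurable_const.add ((measurable_fst.sub measurable_const).div_const _ |>.mul
          measurable_const))
    · refine Finset.measurable_sum _ fun j _ => measurable_const.mul ?_
      exact ((measurable_pi_apply j).comp measurable_snd).sub
        (measurable_const.add ((measurable_fst.sub measurable_const).div_const _ |>.mul
          measurable_const))
  have h2pi : (0:ℝ) < 2 * Real.pi := by positivity
  have hdet' : (0:ℝ) < S'.det := hS'pos.det_pos
  have hC : (2 * Real.pi) ^ (-((n : ℝ) + 1) / 2) * S.det ^ (-(1 : ℝ) / 2) =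
      (Real.sqrt (2 * Real.pi * SYY))⁻¹ *
        ((2 * Real.pi) ^ (-(n : ℝ) / 2) * S'.det ^ (-(1 : ℝ) / 2)) := by
    rw [show (-((n : ℝ) + 1) / 2) = (-(n : ℝ) / 2) + (-(1 : ℝ) / 2) from by ring]
    rw [Real.rpow_add h2pi, hdet, Real.mul_rpow hdet'.le hd0.le]
    rw [Real.sqrt_eq_rpow, ← Real.rpow_neg (by positivity : (0:ℝ) ≤ 2 * Real.pi * SYY),
      Real.mul_rpow (by positivity : (0:ℝ) ≤ 2 * Real.pi) hd0.le]
    rw [show -(1 / (2:ℝ)) = -(1:ℝ)/2 from by ring]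
    ring
  have hpoint : ∀ (y : ℝ) (a : Fin n → ℝ),
      F (eM.symm (y, a)) = ENNReal.ofReal (gaussianPDFReal μY v y) * g y a := by
    intro y a
    have hlast' : (eM.symm (y, a) - μ) (Fin.last n) = y - μY := by
      simp [Pi.sub_apply, hlast y a]; rfl
    have harg : (fun k => (eM.symm (y, a) - μ) k.castSucc) -
        ((eM.symm (y, a) - μ) (Fin.last n) / SYY) • colY =
        a - (μa + ((y - μY) / SYY) • colY) := by
      funext k
      simp only [Pi.sub_apply, Pi.add_apply, Pi.smul_apply, smul_eq_mul, hfun y a, hlast',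
        hlast y a]
      ring
    have hquad' := hquad (eM.symm (y, a) - μ)
    rw [harg, hlast'] at hquad'
    rw [hF, hg]
    simp only []
    rw [hquad']
    rw [← ENNReal.ofReal_mul (gaussianPDFReal_nonneg μY v y)]
    congr 1
    rw [gaussianPDFReal]
    rw [hvS]
    rw [show Real.exp (-(1 / 2) * ((a - (μa + ((y - μY) / SYY) • colY)) ⬝ᵥ
          S'⁻¹.mulVec (a - (μa + ((y - μY) / SYY) • colY)) + (y - μY) * (y - μY) / SYY)) =
        Real.exp (-(y - μY) ^ 2 / (2 * SYY)) *
          Real.exp (-(1 / 2) * ((a - (μa + ((y - μY) / SYY) • colY)) ⬝ᵥ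
            S'⁻¹.mulVec (a - (μa + ((y - μY) / SYY) • colY)))) from by
      rw [← Real.exp_add]; congr 1; ring]
    rw [hC]
    ring
  have hker : Measurable fun y => condDist y Sset := by
    have hrw : (fun y => condDist y Sset) = fun y => ∫⁻ a in Sset, g y a := by
      funext y
      rw [hcond y, withDensity_apply _ hSset]
    rw [hrw]
    exact Measurable.lintegral_prod_right hGmeas
  calc multivariateGaussian μ S A = ∫⁻ x in A, F x := by
        rw [hMG, withDensity_apply _ hAmeas]
    _ = ∫⁻ p in eM.symm ⁻¹' A, F (eM.symm p)
          ∂((volume : Measure ℝ).prod (volume : Measure (Fin n → ℝ))) := by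
        rw [← Measure.volume_eq_prod]
        exact (((volume_preserving_piFinSuccAbove (fun _ : Fin (n + 1) => ℝ)
          (Fin.last n)).symm eM).setLIntegral_comp_preimage_emb
          (MeasurableEquiv.measurableEmbedding eM.symm) F A).symm
    _ = ∫⁻ p in Tset ×ˢ Sset, F (eM.symm p)
          ∂((volume : Measure ℝ).prod (volume : Measure (Fin n → ℝ))) := by rw [hpre]
    _ = ∫⁻ y in Tset, ∫⁻ a in Sset, F (eM.symm (y, a)) := by
        rw [← Measure.prod_restrict]
        exact lintegral_prod _ ((hFmeas.comp eM.symm.measurable).aemeasurable)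
    _ = ∫⁻ y in Tset, ENNReal.ofReal (gaussianPDFReal μY v y) * ∫⁻ a in Sset, g y a := by
        refine lintegral_congr fun y => ?_
        rw [← lintegral_const_mul' _ _ ENNReal.ofReal_ne_top]
        exact lintegral_congr fun a => hpoint y a
    _ = ∫⁻ y in Tset, ENNReal.ofReal (gaussianPDFReal μY v y) * condDist y Sset := by
        refine lintegral_congr fun y => ?_
        rw [hcond y, withDensity_apply _ hSset]
    _ = ∫⁻ y in Tset, condDist y Sset ∂gaussianReal μY v := by
        rw [gaussianReal_of_var_ne_zero _ hv0,
          setLIntegral_withDensity_eq_setLIntegral_mul volume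
            (measurable_gaussianPDF μY v) hker hTset]
        rfl
end
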